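/- Let f and f_n (n ∈ ℕ) be nondecreasing functions from [0,∞) to [0,∞) with lim_{s→∞} f(s) = ∞ and lim_{s→∞} f_n(s) = ∞ for each n, and suppose f_n converges to f uniformly on every compact subset of [0,∞). Let u ≥ 0 be a value that is not a level of constancy of f (there are no 0 ≤ a < b with f(a) = f(b) = u), and let u_n ≥ 0 be a sequence converging to u. Then f_n^{-1}(u_n) converges to f^{-1}(u), where g^{-1}(t) := inf{s ≥ 0 : g(s) > t} denotes the generalized inverse. -/
import Mathlib


open scoped NNReal
open Filter Topology

/-- The generalized inverse `f⁻¹(t) = inf {s ≥ 0 : f s > t}`. -/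
noncomputable def genInv (f : ℝ≥0 → ℝ≥0) (t : ℝ≥0) : ℝ≥0 :=
  sInf {s : ℝ≥0 | t < f s}

/-- If nondecreasing functions `f n : [0,∞) → [0,∞)` tending to `∞` converge to `f`
uniformly on every compact subset of `[0,∞)`, `u` is not a level of constancy of `f`,
and `u n → u`, then `(f n)⁻¹ (u n) → f⁻¹ u`. -/
theorem stmt5 (f : ℕ → ℝ≥0 → ℝ≥0) (g : ℝ≥0 → ℝ≥0)
    (hf : ∀ n, Monotone (f n)) (hg : Monotone g)
    (hft : ∀ n, Tendsto (f n) atTop atTop) (hgt : Tendsto g atTop atTop)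
    (hconv : ∀ K : Set ℝ≥0, IsCompact K → TendstoUniformlyOn f g atTop K)
    (u : ℝ≥0) (hu : ¬ ∃ a b : ℝ≥0, a < b ∧ g a = u ∧ g b = u)
    (un : ℕ → ℝ≥0) (hun : Tendsto un atTop (𝓝 u)) :
    Tendsto (fun n => genInv (f n) (un n)) atTop (𝓝 (genInv g u)) := by
  set x₀ := genInv g u with hx₀
  have hSne : {s : ℝ≥0 | u < g s}.Nonempty := (hgt.eventually_gt_atTop u).exists
  have hle : ∀ s, s < x₀ → g s ≤ u := by
    intro s hs
    by_contra h
    exact absurd (csInf_le (OrderBot.bddBelow _) (show s ∈ {s : ℝ≥0 | u < g s} from lt_of_not_ge h)) (not_le.2 hs)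
  have hlt : ∀ s, s < x₀ → g s < u := by
    intro s hs
    refine lt_of_le_of_ne (hle s hs) fun heq => ?_
    obtain ⟨t, hst, htx⟩ := exists_between hs
    exact hu ⟨s, t, hst, heq, le_antisymm (hle t htx) (heq ▸ hg hst.le)⟩
  have hpt : ∀ s : ℝ≥0, Tendsto (fun n => f n s) atTop (𝓝 (g s)) := fun s =>
    (hconv {s} isCompact_singleton).tendsto_at (Set.mem_singleton s)
  rw [tendsto_order]
  constructor
  · intro a ha
    obtain ⟨s, has, hsx⟩ := exists_between ha
    have hgs := hlt s hsx
    filter_upwards [(hpt s).eventually_lt hun hgs] with n hn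
    have hlb : s ≤ genInv (f n) (un n) := by
      apply le_csInf ((hft n).eventually_gt_atTop (un n)).exists
      intro b hb
      by_contra hbs
      push_neg at hbs
      exact lt_asymm hb (lt_of_le_of_lt (hf n hbs.le) hn)
    exact lt_of_lt_of_le has hlb
  · intro b hb
    obtain ⟨s, hxs, hsb⟩ := exists_between hb
    have hgs : u < g s := by
      obtain ⟨t, htS, hts⟩ := exists_lt_of_csInf_lt hSne hxs
      exact htS.trans_le (hg hts.le)
    filter_upwards [hun.eventually_lt (hpt s) hgs] with n hn
    exact lt_of_le_of_lt (csInf_le (OrderBot.bddBelow _) hn) hsb
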